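/- The set Λ = {θ ∈ Φ_G⁺ : ⟨θ, δ_K⟩ < 0} equals {e_j − e_{m+1} : m/2 + 1 ≤ j ≤ m} ∪ {e_j + Σ_{k=1}^{m+1} e_k : m/2 + 2 ≤ j ≤ m}, with ⟨e_j − e_{m+1}, δ_K⟩ = (1/(2(m+2)))(m/2 − j) and ⟨e_j + Σ_{k=1}^{m+1} e_k, δ_K⟩ = (1/(2(m+2)))(m/2 + 1 − j); moreover Σ_{θ∈Λ} ⟨θ, δ_K⟩ = −m²/(8(m+2)) and ‖δ_G − δ_K‖² = m/4. Consequently 2‖δ_G − δ_K‖² + 4 Σ_{θ∈Λ} ⟨θ, δ_K⟩ + (4m)/8 = ((m+4)/(m+2))·(m/2). -/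
import Mathlib


open Finset

/-- Standard basis vector `e i` of `ℝ^{m+1}`. -/
noncomputable def eVec (m : ℕ) (i : Fin (m + 1)) : Fin (m + 1) → ℝ := Pi.single i 1

/-- The inner product induced by the Killing form of `SU_{m+2}` sign-changed, in the chart
`(μ_1,…,μ_{m+1})`. -/
noncomputable def ipGr2 (m : ℕ) (μ ν : Fin (m + 1) → ℝ) : ℝ :=
  (1 / (2 * ((m : ℝ) + 2))) * ∑ k, μ k * ν k -
    (1 / (2 * ((m : ℝ) + 2) ^ 2)) * (∑ k, μ k) * (∑ k, ν k)

/-- The positive roots of `SU_{m+2}` in this chart. -/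
noncomputable def PosRootsGr2 (m : ℕ) : Finset (Fin (m + 1) → ℝ) :=
  ((univ ×ˢ univ : Finset (Fin (m + 1) × Fin (m + 1))).filter fun p => p.1 < p.2).image
      (fun p => eVec m p.1 - eVec m p.2) ∪
    (univ : Finset (Fin (m + 1))).image fun i => eVec m i + ∑ k, eVec m k

/-- `δ_G = (m+1, m, …, 2, 1)`. -/
noncomputable def deltaGGr2 (m : ℕ) : Fin (m + 1) → ℝ := fun k => ((m : ℝ) + 1) - (k : ℕ)

/-- `δ_K = (1/2)(m, m−2, m−4, …, 2−m, 2)`. -/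
noncomputable def deltaKGr2 (m : ℕ) : Fin (m + 1) → ℝ := fun k =>
  if (k : ℕ) = m then 1 else ((m : ℝ) - 2 * (k : ℕ)) / 2

/-- The set `Λ = {θ ∈ Φ_G⁺ : ⟨θ, δ_K⟩ < 0}`. -/
noncomputable def LambdaGr2 (m : ℕ) : Finset (Fin (m + 1) → ℝ) :=
  (PosRootsGr2 m).filter fun θ => ipGr2 m θ (deltaKGr2 m) < 0

lemma eVec_apply (m : ℕ) (i j : Fin (m+1)) : eVec m i j = if j = i then 1 else 0 := by
  simp [eVec, Pi.single_apply]

lemma sum_eVec_apply (m : ℕ) (j : Fin (m+1)) : (∑ k, eVec m k) j = 1 := by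
  simp [eVec, Finset.sum_apply, Pi.single_apply]

lemma sum_mul_eVec (m : ℕ) (i : Fin (m+1)) (ν : Fin (m+1) → ℝ) :
    ∑ k, eVec m i k * ν k = ν i := by
  simp [eVec_apply, ite_mul]

lemma sum_entries_eVec (m : ℕ) (i : Fin (m+1)) : ∑ k, eVec m i k = 1 := by
  simp [eVec_apply]

lemma ip_sub (m : ℕ) (i j : Fin (m+1)) (ν : Fin (m+1) → ℝ) :
    ipGr2 m (eVec m i - eVec m j) ν = (ν i - ν j) / (2 * ((m:ℝ)+2)) := by
  unfold ipGr2
  have h1 : ∑ k, (eVec m i - eVec m j) k * ν k = ν i - ν j := by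
    simp only [Pi.sub_apply, sub_mul, Finset.sum_sub_distrib, sum_mul_eVec]
  have h2 : ∑ k, (eVec m i - eVec m j) k = 0 := by
    simp only [Pi.sub_apply, Finset.sum_sub_distrib, sum_entries_eVec, sub_self]
  rw [h1, h2]
  ring

lemma ip_plus (m : ℕ) (i : Fin (m+1)) (ν : Fin (m+1) → ℝ) :
    ipGr2 m (eVec m i + ∑ k, eVec m k) ν = ν i / (2 * ((m:ℝ)+2)) := by
  unfold ipGr2
  have h1 : ∑ k, (eVec m i + ∑ k', eVec m k') k * ν k = ν i + ∑ k, ν k := by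
    simp only [Pi.add_apply, add_mul, Finset.sum_add_distrib, sum_mul_eVec, sum_eVec_apply,
      one_mul]
  have h2 : ∑ k, (eVec m i + ∑ k', eVec m k') k = (m:ℝ) + 2 := by
    simp only [Pi.add_apply, Finset.sum_add_distrib, sum_entries_eVec, sum_eVec_apply]
    simp [Finset.card_univ]
    ring
  rw [h1, h2]
  have hne : (m:ℝ) + 2 ≠ 0 := by positivity
  field_simp
  ring

lemma deltaK_lt (m : ℕ) (j : Fin (m+1)) (h : (j:ℕ) < m) :
    deltaKGr2 m j = ((m:ℝ) - 2*(j:ℕ))/2 := by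
  simp [deltaKGr2, Nat.ne_of_lt h]

lemma deltaK_last (m : ℕ) : deltaKGr2 m (Fin.last m) = 1 := by
  simp [deltaKGr2]

lemma sum_range_cast (n : ℕ) : ∑ i ∈ range n, (i:ℝ) = (n:ℝ) * ((n:ℝ) - 1)/2 := by
  induction n with
  | zero => simp
  | succ n ih => rw [Finset.sum_range_succ, ih]; push_cast; ring

lemma sum_range_lin (n : ℕ) (c : ℝ) :
    ∑ k ∈ range n, (c - ((k:ℕ)+1)) = (n:ℝ)*c - (n:ℝ)*((n:ℝ)-1)/2 - n := by
  rw [Finset.sum_sub_distrib, Finset.sum_add_distrib, sum_range_cast]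
  simp [Finset.card_range, nsmul_eq_mul, mul_comm]
  ring

/-- For `Gr_2(ℂ^{m+2}) = SU_{m+2}/S(U_m × U_2)`, `m` even: the set `Λ` consists of the
`e_j − e_{m+1}` for `m/2+1 ≤ j ≤ m` and the `e_j + Σ_k e_k` for `m/2+2 ≤ j ≤ m`
(1-based indices, i.e. 0-based indices `m/2 ≤ j ≤ m−1` resp. `m/2+1 ≤ j ≤ m−1`),
with the stated values of `⟨θ, δ_K⟩`; moreover `Σ_{θ∈Λ}⟨θ,δ_K⟩ = −m²/(8(m+2))` and
`‖δ_G − δ_K‖² = m/4`; consequently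
`2‖δ_G − δ_K‖² + 4Σ_{θ∈Λ}⟨θ,δ_K⟩ + (4m)/8 = ((m+4)/(m+2))·(m/2)`. -/
theorem stmt10 (m : ℕ) (hm : 2 ≤ m) (hme : Even m) :
    LambdaGr2 m =
      ((univ : Finset (Fin (m + 1))).filter fun j : Fin (m+1) => m / 2 ≤ (j : ℕ) ∧ (j : ℕ) ≤ m - 1).image
          (fun j => eVec m j - eVec m (Fin.last m)) ∪
        ((univ : Finset (Fin (m + 1))).filter fun j : Fin (m+1) =>
            m / 2 + 1 ≤ (j : ℕ) ∧ (j : ℕ) ≤ m - 1).image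
          (fun j => eVec m j + ∑ k, eVec m k) ∧
    (∀ j : Fin (m + 1), m / 2 ≤ (j : ℕ) → (j : ℕ) ≤ m - 1 →
      ipGr2 m (eVec m j - eVec m (Fin.last m)) (deltaKGr2 m) =
        (1 / (2 * ((m : ℝ) + 2))) * ((m : ℝ) / 2 - ((j : ℕ) + 1))) ∧
    (∀ j : Fin (m + 1), m / 2 + 1 ≤ (j : ℕ) → (j : ℕ) ≤ m - 1 →
      ipGr2 m (eVec m j + ∑ k, eVec m k) (deltaKGr2 m) =
        (1 / (2 * ((m : ℝ) + 2))) * ((m : ℝ) / 2 + 1 - ((j : ℕ) + 1))) ∧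
    (∑ θ ∈ LambdaGr2 m, ipGr2 m θ (deltaKGr2 m)) = -(m : ℝ) ^ 2 / (8 * ((m : ℝ) + 2)) ∧
    ipGr2 m (deltaGGr2 m - deltaKGr2 m) (deltaGGr2 m - deltaKGr2 m) = (m : ℝ) / 4 ∧
    2 * ipGr2 m (deltaGGr2 m - deltaKGr2 m) (deltaGGr2 m - deltaKGr2 m) +
        4 * (∑ θ ∈ LambdaGr2 m, ipGr2 m θ (deltaKGr2 m)) + (4 * (m : ℝ)) / 8 =
      (((m : ℝ) + 4) / ((m : ℝ) + 2)) * ((m : ℝ) / 2) := by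
  have hq2 : 2 * (m / 2) = m := by obtain ⟨r, hr⟩ := hme; omega
  have hmne : (m:ℝ) + 2 ≠ 0 := by positivity
  have hdpos : (0:ℝ) < 2 * ((m:ℝ) + 2) := by positivity
  -- value formulas
  have hval1 : ∀ j : Fin (m + 1), m / 2 ≤ (j : ℕ) → (j : ℕ) ≤ m - 1 →
      ipGr2 m (eVec m j - eVec m (Fin.last m)) (deltaKGr2 m) =
        (1 / (2 * ((m : ℝ) + 2))) * ((m : ℝ) / 2 - ((j : ℕ) + 1)) := by
    intro j hj1 hj2
    have hjm : (j:ℕ) < m := by omega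
    rw [ip_sub, deltaK_lt m j hjm, deltaK_last]
    field_simp
    ring
  have hval2 : ∀ j : Fin (m + 1), m / 2 + 1 ≤ (j : ℕ) → (j : ℕ) ≤ m - 1 →
      ipGr2 m (eVec m j + ∑ k, eVec m k) (deltaKGr2 m) =
        (1 / (2 * ((m : ℝ) + 2))) * ((m : ℝ) / 2 + 1 - ((j : ℕ) + 1)) := by
    intro j hj1 hj2
    have hjm : (j:ℕ) < m := by omega
    rw [ip_plus, deltaK_lt m j hjm]
    field_simp
    ring
  -- set equality
  have hset : LambdaGr2 m =
      ((univ : Finset (Fin (m + 1))).filter fun j : Fin (m+1) => m / 2 ≤ (j : ℕ) ∧ (j : ℕ) ≤ m - 1).image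
          (fun j => eVec m j - eVec m (Fin.last m)) ∪
        ((univ : Finset (Fin (m + 1))).filter fun j : Fin (m+1) =>
            m / 2 + 1 ≤ (j : ℕ) ∧ (j : ℕ) ≤ m - 1).image
          (fun j => eVec m j + ∑ k, eVec m k) := by
    ext θ
    constructor
    · intro hθ
      rw [LambdaGr2, Finset.mem_filter, PosRootsGr2, Finset.mem_union] at hθ
      obtain ⟨hmem, hlt⟩ := hθ
      rw [Finset.mem_union]
      rcases hmem with h | h
      · obtain ⟨p, hp, rfl⟩ := Finset.mem_image.1 h
        have hplt : p.1 < p.2 := (Finset.mem_filter.1 hp).2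
        have hnat : (p.1:ℕ) < (p.2:ℕ) := hplt
        rw [ip_sub] at hlt
        have hlt' : deltaKGr2 m p.1 < deltaKGr2 m p.2 := by
          by_contra hcon
          push_neg at hcon
          have : (0:ℝ) ≤ (deltaKGr2 m p.1 - deltaKGr2 m p.2) / (2*((m:ℝ)+2)) :=
            div_nonneg (by linarith) hdpos.le
          linarith
        by_cases h2 : (p.2:ℕ) = m
        · have hp2 : p.2 = Fin.last m := Fin.ext h2
          have h1m : (p.1:ℕ) < m := by omega
          rw [deltaK_lt m p.1 h1m, hp2, deltaK_last] at hlt'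
          have hrc : (m:ℝ) < 2*((p.1:ℕ):ℝ) + 2 := by linarith
          have hnn : (m:ℕ) < 2*(p.1:ℕ) + 2 := by exact_mod_cast hrc
          left
          exact Finset.mem_image.2 ⟨p.1,
            Finset.mem_filter.2 ⟨Finset.mem_univ _, by omega, by omega⟩, by rw [hp2]⟩
        · have h2m : (p.2:ℕ) < m := by have := p.2.isLt; omega
          rw [deltaK_lt m p.1 (by omega), deltaK_lt m p.2 h2m] at hlt'
          exfalso
          have : ((p.1:ℕ):ℝ) < ((p.2:ℕ):ℝ) := by exact_mod_cast hnat
          linarith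
      · obtain ⟨i, _, rfl⟩ := Finset.mem_image.1 h
        rw [ip_plus] at hlt
        have hlt' : deltaKGr2 m i < 0 := by
          by_contra hcon
          push_neg at hcon
          have : (0:ℝ) ≤ deltaKGr2 m i / (2*((m:ℝ)+2)) := div_nonneg hcon hdpos.le
          linarith
        by_cases h2 : (i:ℕ) = m
        · exfalso
          rw [show i = Fin.last m from Fin.ext h2, deltaK_last] at hlt'
          linarith
        · have him : (i:ℕ) < m := by have := i.isLt; omega
          rw [deltaK_lt m i him] at hlt'
          have hrc : (m:ℝ) < 2*((i:ℕ):ℝ) := by linarith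
          have hnn : (m:ℕ) < 2*(i:ℕ) := by exact_mod_cast hrc
          right
          exact Finset.mem_image.2 ⟨i,
            Finset.mem_filter.2 ⟨Finset.mem_univ _, by omega, by omega⟩, rfl⟩
    · intro hθ
      rw [LambdaGr2, Finset.mem_filter, PosRootsGr2, Finset.mem_union]
      rcases Finset.mem_union.1 hθ with h | h
      · obtain ⟨j, hj, rfl⟩ := Finset.mem_image.1 h
        obtain ⟨-, hj1, hj2⟩ := Finset.mem_filter.1 hj
        have hjm : (j:ℕ) < m := by omega
        constructor
        · left
          refine Finset.mem_image.2 ⟨(j, Fin.last m), Finset.mem_filter.2 ⟨?_, ?_⟩, rfl⟩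
          · exact Finset.mem_product.2 ⟨Finset.mem_univ _, Finset.mem_univ _⟩
          · show j < Fin.last m
            rw [Fin.lt_iff_val_lt_val]
            simpa using hjm
        · rw [ip_sub, deltaK_lt m j hjm, deltaK_last]
          apply div_neg_of_neg_of_pos _ hdpos
          have h1 : (m:ℕ) ≤ 2*(j:ℕ) := by omega
          have h2 : (m:ℝ) ≤ 2*((j:ℕ):ℝ) := by exact_mod_cast h1
          linarith
      · obtain ⟨j, hj, rfl⟩ := Finset.mem_image.1 h
        obtain ⟨-, hj1, hj2⟩ := Finset.mem_filter.1 hj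
        have hjm : (j:ℕ) < m := by omega
        constructor
        · right
          exact Finset.mem_image.2 ⟨j, Finset.mem_univ _, rfl⟩
        · rw [ip_plus, deltaK_lt m j hjm]
          apply div_neg_of_neg_of_pos _ hdpos
          have h1 : (m:ℕ) < 2*(j:ℕ) := by omega
          have h2 : (m:ℝ) < 2*((j:ℕ):ℝ) := by exact_mod_cast h1
          linarith
  -- the sum over Λ
  have hinj1 : ∀ x : Fin (m+1), ∀ y : Fin (m+1),
      eVec m x - eVec m (Fin.last m) = eVec m y - eVec m (Fin.last m) → x = y := by
    intro x y h
    have hx' := congrFun h x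
    simp only [Pi.sub_apply] at hx'
    have h1 : eVec m x x = eVec m y x := by linarith
    rw [eVec_apply, eVec_apply] at h1
    by_contra hne
    simp [hne] at h1
  have hinj2 : ∀ x : Fin (m+1), ∀ y : Fin (m+1),
      eVec m x + (∑ k, eVec m k) = eVec m y + (∑ k, eVec m k) → x = y := by
    intro x y h
    have hx' := congrFun h x
    simp only [Pi.add_apply] at hx'
    have h1 : eVec m x x = eVec m y x := by linarith
    rw [eVec_apply, eVec_apply] at h1
    by_contra hne
    simp [hne] at h1
  have hdisj : Disjoint
      (((univ : Finset (Fin (m + 1))).filter fun j : Fin (m+1) => m / 2 ≤ (j : ℕ) ∧ (j : ℕ) ≤ m - 1).image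
          (fun j => eVec m j - eVec m (Fin.last m)))
      (((univ : Finset (Fin (m + 1))).filter fun j : Fin (m+1) =>
            m / 2 + 1 ≤ (j : ℕ) ∧ (j : ℕ) ≤ m - 1).image
          (fun j => eVec m j + ∑ k, eVec m k)) := by
    rw [Finset.disjoint_left]
    intro θ h1 h2
    obtain ⟨a, ha, rfl⟩ := Finset.mem_image.1 h1
    obtain ⟨b, hb, heq⟩ := Finset.mem_image.1 h2
    have ha2 : (a:ℕ) ≤ m - 1 := ((Finset.mem_filter.1 ha).2).2
    have hal : ¬ (Fin.last m = a) := by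
      intro hcon
      have : (a:ℕ) = m := by rw [← hcon]; simp
      omega
    have hc := congrFun heq (Fin.last m)
    simp only [Pi.add_apply, Pi.sub_apply, sum_eVec_apply, eVec_apply] at hc
    split_ifs at hc <;> norm_num at hc
  have hsum : (∑ θ ∈ LambdaGr2 m, ipGr2 m θ (deltaKGr2 m)) =
      -(m : ℝ) ^ 2 / (8 * ((m : ℝ) + 2)) := by
    rw [hset, Finset.sum_union hdisj, Finset.sum_image (fun x _ y _ h => hinj1 x y h),
        Finset.sum_image (fun x _ y _ h => hinj2 x y h)]
    have e1 : ∑ j ∈ ((univ : Finset (Fin (m + 1))).filter fun j : Fin (m+1) => m / 2 ≤ (j : ℕ) ∧ (j : ℕ) ≤ m - 1),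
        ipGr2 m (eVec m j - eVec m (Fin.last m)) (deltaKGr2 m)
        = ∑ j ∈ ((univ : Finset (Fin (m + 1))).filter fun j : Fin (m+1) => m / 2 ≤ (j : ℕ) ∧ (j : ℕ) ≤ m - 1),
          (1/(2*((m:ℝ)+2))) * ((m:ℝ)/2 - ((j:ℕ)+1)) :=
      Finset.sum_congr rfl fun j hj => by
        obtain ⟨-, h1, h2⟩ := Finset.mem_filter.1 hj
        exact hval1 j h1 h2
    have e2 : ∑ j ∈ ((univ : Finset (Fin (m + 1))).filter fun j : Fin (m+1) => m / 2 + 1 ≤ (j : ℕ) ∧ (j : ℕ) ≤ m - 1),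
        ipGr2 m (eVec m j + ∑ k, eVec m k) (deltaKGr2 m)
        = ∑ j ∈ ((univ : Finset (Fin (m + 1))).filter fun j : Fin (m+1) => m / 2 + 1 ≤ (j : ℕ) ∧ (j : ℕ) ≤ m - 1),
          (1/(2*((m:ℝ)+2))) * ((m:ℝ)/2 + 1 - ((j:ℕ)+1)) :=
      Finset.sum_congr rfl fun j hj => by
        obtain ⟨-, h1, h2⟩ := Finset.mem_filter.1 hj
        exact hval2 j h1 h2
    rw [e1, e2]
    have conv1 : ∑ j ∈ ((univ : Finset (Fin (m + 1))).filter fun j : Fin (m+1) => m / 2 ≤ (j : ℕ) ∧ (j : ℕ) ≤ m - 1),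
          ((1:ℝ)/(2*((m:ℝ)+2))) * ((m:ℝ)/2 - ((j:ℕ)+1))
        = ∑ k ∈ Ico (m/2) m, ((1:ℝ)/(2*((m:ℝ)+2))) * ((m:ℝ)/2 - ((k:ℕ)+1)) := by
      rw [Finset.sum_filter]
      rw [Fin.sum_univ_eq_sum_range
        (fun k : ℕ => if m/2 ≤ k ∧ k ≤ m-1 then ((1:ℝ)/(2*((m:ℝ)+2))) * ((m:ℝ)/2 - ((k:ℕ)+1)) else 0) (m+1)]
      rw [← Finset.sum_filter]
      congr 1
      ext k
      simp only [Finset.mem_filter, Finset.mem_range, Finset.mem_Ico]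
      omega
    have conv2 : ∑ j ∈ ((univ : Finset (Fin (m + 1))).filter fun j : Fin (m+1) => m / 2 + 1 ≤ (j : ℕ) ∧ (j : ℕ) ≤ m - 1),
          ((1:ℝ)/(2*((m:ℝ)+2))) * ((m:ℝ)/2 + 1 - ((j:ℕ)+1))
        = ∑ k ∈ Ico (m/2+1) m, ((1:ℝ)/(2*((m:ℝ)+2))) * ((m:ℝ)/2 + 1 - ((k:ℕ)+1)) := by
      rw [Finset.sum_filter]
      rw [Fin.sum_univ_eq_sum_range
        (fun k : ℕ => if m/2+1 ≤ k ∧ k ≤ m-1 then ((1:ℝ)/(2*((m:ℝ)+2))) * ((m:ℝ)/2 + 1 - ((k:ℕ)+1)) else 0) (m+1)]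
      rw [← Finset.sum_filter]
      congr 1
      ext k
      simp only [Finset.mem_filter, Finset.mem_range, Finset.mem_Ico]
      omega
    rw [conv1, conv2, ← Finset.mul_sum, ← Finset.mul_sum]
    rw [Finset.sum_Ico_eq_sub _ (by omega : m/2 ≤ m),
        Finset.sum_Ico_eq_sub _ (by omega : m/2+1 ≤ m),
        sum_range_lin, sum_range_lin, sum_range_lin, sum_range_lin]
    have hQ : (m:ℝ) = 2 * ((m/2 : ℕ) : ℝ) := by exact_mod_cast hq2.symm
    have hQ1 : (1:ℝ) ≤ ((m/2 : ℕ) : ℝ) := by exact_mod_cast Nat.one_le_iff_ne_zero.2 (by omega)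
    push_cast
    rw [hQ]
    have hne : 2 * ((m/2:ℕ):ℝ) + 2 ≠ 0 := by positivity
    field_simp
    ring
  -- the norm
  have hnorm : ipGr2 m (deltaGGr2 m - deltaKGr2 m) (deltaGGr2 m - deltaKGr2 m) = (m : ℝ) / 4 := by
    have hdk : ∀ k : Fin (m+1), (deltaGGr2 m - deltaKGr2 m) k =
        if (k:ℕ) = m then 0 else ((m:ℝ)+2)/2 := by
      intro k
      show deltaGGr2 m k - deltaKGr2 m k = _
      unfold deltaGGr2 deltaKGr2
      by_cases h : (k:ℕ) = m
      · rw [if_pos h, if_pos h, h]; ring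
      · rw [if_neg h, if_neg h]; ring
    have hlast : (deltaGGr2 m - deltaKGr2 m) (Fin.last m) = 0 := by
      rw [hdk]; simp
    have hcs : ∀ k : Fin m, (deltaGGr2 m - deltaKGr2 m) k.castSucc = ((m:ℝ)+2)/2 := by
      intro k
      rw [hdk]
      exact if_neg (by simpa using Nat.ne_of_lt k.isLt)
    have h1 : ∑ k, (deltaGGr2 m - deltaKGr2 m) k * (deltaGGr2 m - deltaKGr2 m) k
        = (m:ℝ) * (((m:ℝ)+2)/2)^2 := by
      rw [Fin.sum_univ_castSucc]
      simp only [hcs, hlast, mul_zero, add_zero]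
      rw [Finset.sum_const, Finset.card_univ, Fintype.card_fin, nsmul_eq_mul]
      ring
    have h2 : ∑ k, (deltaGGr2 m - deltaKGr2 m) k = (m:ℝ) * (((m:ℝ)+2)/2) := by
      rw [Fin.sum_univ_castSucc]
      simp only [hcs, hlast, add_zero]
      rw [Finset.sum_const, Finset.card_univ, Fintype.card_fin, nsmul_eq_mul]
    unfold ipGr2
    rw [h1, h2]
    field_simp
    ring
  refine ⟨hset, hval1, hval2, hsum, hnorm, ?_⟩
  rw [hsum, hnorm]
  field_simp
  ring
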